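/- If φ is an automorphism of a group G and K ⊆ G, then the φ-spectrum of K equals {0, 1, ..., n} if and only if n is the smallest natural number such that K ⊆ ⋃_{k=1}^{n+1} φ^k(K). -/
import Mathlib


noncomputable def phiOrd {G : Type*} (f : G → G) (K : Set G) (g : G) : ℕ∞ :=
  sInf ((fun k : ℕ => (k : ℕ∞)) '' {k : ℕ | f^[k] g ∈ K})

lemma phiOrd_eq_iff {G : Type*} (f : G → G) (K : Set G) (g : G) (m : ℕ) :
    phiOrd f K g = (m : ℕ∞) ↔ f^[m] g ∈ K ∧ ∀ j < m, f^[j] g ∉ K := by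
  set A : Set ℕ := {k | f^[k] g ∈ K} with hA
  constructor
  · intro h
    have hAne : A.Nonempty := by
      by_contra hne
      rw [Set.not_nonempty_iff_eq_empty] at hne
      rw [phiOrd, ← hA, hne] at h
      simp at h
    have h1 : sInf ((fun k : ℕ => (k : ℕ∞)) '' A) = ((sInf A : ℕ) : ℕ∞) := by
      apply le_antisymm
      · exact sInf_le ⟨sInf A, Nat.sInf_mem hAne, rfl⟩
      · refine le_sInf ?_
        rintro x ⟨j, hj, rfl⟩
        simp only []
        exact_mod_cast Nat.sInf_le hj
    rw [phiOrd, ← hA, h1] at h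
    have h2 : sInf A = m := by exact_mod_cast h
    constructor
    · have := Nat.sInf_mem hAne; rwa [h2] at this
    · intro j hj
      exact Nat.notMem_of_lt_sInf (by rw [h2]; exact hj)
  · rintro ⟨h1, h2⟩
    rw [phiOrd, ← hA]
    apply le_antisymm
    · exact sInf_le ⟨m, h1, rfl⟩
    · refine le_sInf ?_
      rintro x ⟨j, hj, rfl⟩
      by_contra hlt
      push_neg at hlt
      have : j < m := by exact_mod_cast hlt
      exact h2 j this hj

lemma mem_spec_iff {G : Type*} [Group G] (φ : G ≃* G) (K : Set G) (m : ℕ) :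
    (∃ g : G, phiOrd ⇑φ K g = (m : ℕ∞)) ↔
      ∃ h ∈ K, ∀ k, 1 ≤ k → k ≤ m → h ∉ (⇑φ)^[k] '' K := by
  constructor
  · rintro ⟨g, hg⟩
    rw [phiOrd_eq_iff] at hg
    refine ⟨(⇑φ)^[m] g, hg.1, ?_⟩
    rintro k hk1 hkm ⟨x, hx, hxe⟩
    have hdec : (⇑φ)^[k] ((⇑φ)^[m - k] g) = (⇑φ)^[m] g := by
      rw [← Function.iterate_add_apply]
      congr 1
      omega
    have hinj : Function.Injective ((⇑φ)^[k]) := φ.injective.iterate k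
    have hx' : x = (⇑φ)^[m - k] g := hinj (by rw [hxe, hdec])
    have : (⇑φ)^[m - k] g ∈ K := hx' ▸ hx
    exact hg.2 (m - k) (by omega) this
  · rintro ⟨h, hh, hav⟩
    have hli : Function.LeftInverse ⇑φ ⇑φ.symm := φ.apply_symm_apply
    refine ⟨(⇑φ.symm)^[m] h, ?_⟩
    rw [phiOrd_eq_iff]
    constructor
    · rw [hli.iterate m h]
      exact hh
    · intro j hj hmem
      have hsplit : (⇑φ.symm)^[m] h = (⇑φ.symm)^[j] ((⇑φ.symm)^[m - j] h) := by
        rw [← Function.iterate_add_apply]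
        congr 1
        omega
      have hx : (⇑φ)^[j] ((⇑φ.symm)^[m] h) = (⇑φ.symm)^[m - j] h := by
        rw [hsplit, hli.iterate j]
      rw [hx] at hmem
      refine hav (m - j) (by omega) (by omega) ?_
      exact ⟨(⇑φ.symm)^[m - j] h, hmem, hli.iterate (m - j) h⟩

theorem stmt16 {G : Type*} [Group G] (φ : G ≃* G) (K : Set G) (hK : K.Nonempty)
    (n : ℕ) :
    {m : ℕ | ∃ g : G, phiOrd ⇑φ K g = (m : ℕ∞)} = Set.Iic n ↔
      IsLeast {m : ℕ | K ⊆ ⋃ k ∈ Set.Icc 1 (m + 1), (⇑φ)^[k] '' K} n := by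
  have hkey : ∀ m : ℕ, (K ⊆ ⋃ k ∈ Set.Icc 1 m, (⇑φ)^[k] '' K) ↔
      ¬ ∃ g : G, phiOrd ⇑φ K g = (m : ℕ∞) := by
    intro m
    rw [mem_spec_iff]
    push_neg
    constructor
    · intro hsub h hhK
      have := hsub hhK
      simp only [Set.mem_iUnion, Set.mem_Icc] at this
      obtain ⟨k, ⟨hk1, hkm⟩, hk⟩ := this
      exact ⟨k, hk1, hkm, hk⟩
    · intro hall x hx
      obtain ⟨k, hk1, hkm, hk⟩ := hall x hx
      simp only [Set.mem_iUnion, Set.mem_Icc]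
      exact ⟨k, ⟨hk1, hkm⟩, hk⟩
  have hzero : ∃ g : G, phiOrd ⇑φ K g = ((0 : ℕ) : ℕ∞) := by
    rw [mem_spec_iff]
    obtain ⟨h, hh⟩ := hK
    exact ⟨h, hh, fun k hk1 hk0 _ => by omega⟩
  have hdown : ∀ i j : ℕ, i ≤ j → (∃ g : G, phiOrd ⇑φ K g = (j : ℕ∞)) →
      ∃ g : G, phiOrd ⇑φ K g = (i : ℕ∞) := by
    intro i j hij hj
    rw [mem_spec_iff] at hj ⊢
    obtain ⟨h, hh, hav⟩ := hj
    exact ⟨h, hh, fun k hk1 hki => hav k hk1 (le_trans hki hij)⟩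
  constructor
  · intro hS
    constructor
    · show K ⊆ _
      rw [hkey (n + 1)]
      intro hmem
      have : n + 1 ∈ Set.Iic n := hS ▸ hmem
      simp at this
    · intro m hm
      have hm' : ¬ ∃ g : G, phiOrd ⇑φ K g = ((m + 1 : ℕ) : ℕ∞) := (hkey (m + 1)).mp hm
      by_contra hlt
      push_neg at hlt
      have : m + 1 ∈ Set.Iic n := by simp; omega
      rw [← hS] at this
      exact hm' this
  · rintro ⟨hn, hleast⟩
    have hn' : ¬ ∃ g : G, phiOrd ⇑φ K g = ((n + 1 : ℕ) : ℕ∞) := (hkey (n + 1)).mp hn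
    ext m
    simp only [Set.mem_setOf_eq, Set.mem_Iic]
    constructor
    · intro hm
      by_contra hgt
      push_neg at hgt
      exact hn' (hdown (n + 1) m hgt hm)
    · intro hm
      by_contra hnm
      rcases Nat.eq_zero_or_pos m with h0 | hpos
      · exact hnm (h0 ▸ hzero)
      · have : n ≤ m - 1 := hleast (by
          show K ⊆ _
          rw [hkey (m - 1 + 1)]
          have : m - 1 + 1 = m := by omega
          rw [this]
          exact hnm)
        omega
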